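/- arXiv:2411.15046 — 4 statements merged into one kernel-verified Lean document; each statement's English description precedes it below -/
import Mathlib

section
/- Fix a joint policy π*, an agent i, a function A^i : S × A → ℝ with A^i ≥ 0 everywhere, and a function V^i : S → ℝ. Suppose the reward of agent i satisfies, for all (s,a) ∈ S × A, R^i(s,a) = −A^i(s,a)·1_{E^i(s,a)} + V^i(s) − γ Σ_{s'} P(s'|s,a) V^i(s'). Then the value function of agent i under π* equals V^i, i.e., V^{i,π*}(s) = V^i(s) for every state s. -/
open Finset

noncomputable section

/-- A probability vector on a finite type: nonnegative entries summing to 1. -/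
def IsProbVec {X : Type*} [Fintype X] (p : X → ℝ) : Prop :=
  (∀ x, 0 ≤ p x) ∧ ∑ x, p x = 1

variable {n : ℕ} {S : Type*} {A : Fin n → Type*}

/-- The joint probability `π(a|s) = ∏ i, π^i(a^i|s)` of a joint policy. -/
def jointProb [∀ i, Fintype (A i)] (π : ∀ i : Fin n, S → A i → ℝ)
    (s : S) (a : ∀ i, A i) : ℝ :=
  ∏ i, π i s (a i)

/-- The probability `π^{-i}(a^{-i}|s) = ∏_{j ≠ i} π^j(a^j|s)` assigned by all agents
except `i` to their components of the joint action `a`. -/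
def exceptProb [∀ i, Fintype (A i)] (π : ∀ i : Fin n, S → A i → ℝ)
    (i : Fin n) (s : S) (a : ∀ i, A i) : ℝ :=
  ∏ j ∈ Finset.univ.erase i, π j s (a j)

/-- The joint probability of the policy `(ρ^i, π^{-i})` where agent `i` deviates to
`ρ` and everyone else follows `π`. -/
def devProb [∀ i, Fintype (A i)] (π : ∀ i : Fin n, S → A i → ℝ)
    (i : Fin n) (ρ : S → A i → ℝ) (s : S) (a : ∀ i, A i) : ℝ :=
  ρ s (a i) * exceptProb π i s a

/-- The Bellman equation `V = r_π + γ M_π V` characterizing the value function of the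
joint (state-action) distribution `πj` in the game with kernel `P` and reward `R`. -/
def BellmanEq [Fintype S] [∀ i, Fintype (A i)] (γ : ℝ)
    (P : S → (∀ i, A i) → S → ℝ) (R : S → (∀ i, A i) → ℝ)
    (πj : S → (∀ i, A i) → ℝ) (V : S → ℝ) : Prop :=
  ∀ s, V s = (∑ a, πj s a * R s a) + γ * ∑ s', (∑ a, πj s a * P s a s') * V s'

/-- The Q-function `Q(s,a) = R(s,a) + γ Σ_{s'} P(s'|s,a) V(s')` associated with a
value function `V`. -/
def Qfun [Fintype S] [∀ i, Fintype (A i)] (γ : ℝ)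
    (P : S → (∀ i, A i) → S → ℝ) (R : S → (∀ i, A i) → ℝ)
    (V : S → ℝ) (s : S) (a : ∀ i, A i) : ℝ :=
  R s a + γ * ∑ s', P s a s' * V s'

/-- `π` is a Nash equilibrium: for every agent `i` and every stationary deviation `ρ` of
agent `i`, the value of `(ρ, π^{-i})` is at most the value of `π` at every state (value
functions being the unique solutions of the respective Bellman equations). -/
def IsNash [Fintype S] [∀ i, Fintype (A i)] (γ : ℝ)
    (P : S → (∀ i, A i) → S → ℝ) (R : Fin n → S → (∀ i, A i) → ℝ)
    (π : ∀ i : Fin n, S → A i → ℝ) : Prop :=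
  ∀ (i : Fin n) (ρ : S → A i → ℝ), (∀ s, IsProbVec (ρ s)) →
    ∀ Vdev V : S → ℝ, BellmanEq γ P (R i) (devProb π i ρ) Vdev →
      BellmanEq γ P (R i) (jointProb π) V → ∀ s, Vdev s ≤ V s

/-- if the reward of agent `i` has the explicit form
`R^i(s,a) = −A^i(s,a)·1_{E^i(s,a)} + V^i(s) − γ Σ_{s'} P(s'|s,a) V^i(s')` with `A^i ≥ 0`,
then the value function of agent `i` under `π*` equals `V^i`. -/
theorem stmt4 [Fintype S] [Nonempty S] [∀ i, Fintype (A i)] [∀ i, Nonempty (A i)]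
    (hn : 1 ≤ n)
    (γ : ℝ) (hγ0 : 0 ≤ γ) (hγ1 : γ < 1)
    (P : S → (∀ i, A i) → S → ℝ) (hP : ∀ s a, IsProbVec (P s a))
    (π : ∀ i : Fin n, S → A i → ℝ) (hπ : ∀ i s, IsProbVec (π i s))
    (i : Fin n)
    (Adv : S → (∀ j, A j) → ℝ) (hAdv : ∀ s a, 0 ≤ Adv s a)
    (Vi : S → ℝ)
    (R : S → (∀ j, A j) → ℝ)
    (hR : ∀ s a, R s a =
      -Adv s a * (if π i s (a i) = 0 ∧ 0 < exceptProb π i s a then (1 : ℝ) else 0)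
        + Vi s - γ * ∑ s', P s a s' * Vi s') :
    ∀ W : S → ℝ, BellmanEq γ P R (jointProb π) W → ∀ s, W s = Vi s := by
  
  intro W hW
  set M : S → S → ℝ := fun s s' => ∑ a, jointProb π s a * P s a s' with hM
  have hjnn : ∀ s a, 0 ≤ jointProb π s a := fun s a =>
    Finset.prod_nonneg fun j _ => (hπ j s).1 (a j)
  have hjsum : ∀ s, ∑ a, jointProb π s a = 1 := by
    intro s
    have := (Fintype.prod_sum (fun j (b : A j) => π j s b)).symm
    simp only [jointProb]
    rw [this]
    simp [(fun j => (hπ j s).2)]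
  have hMnn : ∀ s s', 0 ≤ M s s' := fun s s' =>
    Finset.sum_nonneg fun a _ => mul_nonneg (hjnn s a) ((hP s a).1 s')
  have hMsum : ∀ s, ∑ s', M s s' = 1 := by
    intro s
    rw [Finset.sum_comm]
    calc ∑ a, ∑ s', jointProb π s a * P s a s'
        = ∑ a, jointProb π s a * ∑ s', P s a s' := by
          simp [Finset.mul_sum]
      _ = 1 := by simp [(fun a => (hP s a).2), hjsum s]
  have hswap : ∀ s (V : S → ℝ), ∑ a, jointProb π s a * ∑ s', P s a s' * V s'
      = ∑ s', M s s' * V s' := by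
    intro s V
    simp only [Finset.mul_sum]
    rw [Finset.sum_comm]
    refine Finset.sum_congr rfl fun s' _ => ?_
    rw [hM, Finset.sum_mul]
    exact Finset.sum_congr rfl fun a _ => by ring
  have hkey : ∀ s, W s - Vi s = γ * ∑ s', M s s' * (W s' - Vi s') := by
    intro s
    have hrw : ∑ a, jointProb π s a * R s a = Vi s - γ * ∑ s', M s s' * Vi s' := by
      have h1 : ∀ a, jointProb π s a * R s a
          = jointProb π s a * Vi s - γ * (jointProb π s a * ∑ s', P s a s' * Vi s') := by
        intro a
        rw [hR s a]
        by_cases h : π i s (a i) = 0 ∧ 0 < exceptProb π i s a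
        · have : jointProb π s a = 0 :=
            Finset.prod_eq_zero (Finset.mem_univ i) h.1
          simp [this]
        · simp only [if_neg h]; ring
      rw [Finset.sum_congr rfl fun a _ => h1 a, Finset.sum_sub_distrib,
        ← Finset.sum_mul, hjsum s, one_mul, ← Finset.mul_sum, hswap s Vi]
    have := hW s
    rw [hrw] at this
    have hMW : ∑ s', M s s' * (W s' - Vi s')
        = (∑ s', M s s' * W s') - ∑ s', M s s' * Vi s' := by
      rw [← Finset.sum_sub_distrib]
      exact Finset.sum_congr rfl fun s' _ => by ring
    rw [hMW]
    have hMw' : ∑ s', (∑ a, jointProb π s a * P s a s') * W s' = ∑ s', M s s' * W s' := rfl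
    rw [hMw'] at this
    linarith [this]
  -- sup norm argument
  have hbound : ∀ s, |W s - Vi s| ≤ γ * (Finset.univ.sup' Finset.univ_nonempty
      (fun s' => |W s' - Vi s'|)) := by
    intro s
    set C := Finset.univ.sup' Finset.univ_nonempty (fun s' => |W s' - Vi s'|) with hC
    rw [hkey s, abs_mul, abs_of_nonneg hγ0]
    refine mul_le_mul_of_nonneg_left ?_ hγ0
    calc |∑ s', M s s' * (W s' - Vi s')| ≤ ∑ s', |M s s' * (W s' - Vi s')| :=
          Finset.abs_sum_le_sum_abs _ _
      _ ≤ ∑ s', M s s' * C := by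
          refine Finset.sum_le_sum fun s' _ => ?_
          rw [abs_mul, abs_of_nonneg (hMnn s s')]
          exact mul_le_mul_of_nonneg_left
            (Finset.le_sup' (fun s'' => |W s'' - Vi s''|) (Finset.mem_univ s')) (hMnn s s')
      _ = C := by rw [← Finset.sum_mul, hMsum s, one_mul]
  intro s
  obtain ⟨s₀, _, hs₀⟩ := Finset.exists_mem_eq_sup' (Finset.univ_nonempty (α := S))
    (fun s' => |W s' - Vi s'|)
  have h0 : |W s₀ - Vi s₀| ≤ γ * |W s₀ - Vi s₀| := by
    have h := hbound s₀; rwa [hs₀] at h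
  have : |W s₀ - Vi s₀| ≤ 0 := by nlinarith [abs_nonneg (W s₀ - Vi s₀)]
  have hC0 : Finset.univ.sup' Finset.univ_nonempty (fun s' => |W s' - Vi s'|) ≤ 0 := by
    rw [hs₀]; exact this
  have := le_trans (Finset.le_sup' (fun s' => |W s' - Vi s'|) (Finset.mem_univ s)) hC0
  have := abs_nonneg (W s - Vi s)
  have : |W s - Vi s| = 0 := le_antisymm (by linarith) (by linarith)
  have := abs_eq_zero.mp this
  linarith
end
end

section
/- Let π* be a joint policy. Suppose that for every agent i there exist a function A^i : S × A → ℝ with A^i ≥ 0 everywhere and a function V^i : S → ℝ such that for all (s,a) ∈ S × A, R^i(s,a) = −A^i(s,a)·1_{E^i(s,a)} + V^i(s) − γ Σ_{s'} P(s'|s,a) V^i(s'). Then π* is a Nash equilibrium of the Markov game with rewards (R^1,…,R^n); that is, every reward tuple of this explicit form is feasible for the MAIRL problem with Nash expert π*. -/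
open Finset

noncomputable section

variable {n : ℕ} {S : Type*} {A : Fin n → Type*}

private lemma contraction_nonpos {S : Type*} [Fintype S] [Nonempty S]
    {γ : ℝ} (hγ0 : 0 ≤ γ) (hγ1 : γ < 1)
    (M : S → S → ℝ) (hM0 : ∀ s s', 0 ≤ M s s') (hM1 : ∀ s, ∑ s', M s s' = 1)
    (W : S → ℝ) (hW : ∀ s, W s ≤ γ * ∑ s', M s s' * W s') :
    ∀ s, W s ≤ 0 := by
  obtain ⟨s0, -, hs0⟩ := Finset.exists_max_image Finset.univ W Finset.univ_nonempty
  have h1 : W s0 ≤ γ * W s0 := by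
    calc W s0 ≤ γ * ∑ s', M s0 s' * W s' := hW s0
      _ ≤ γ * ∑ s', M s0 s' * W s0 := by
          apply mul_le_mul_of_nonneg_left _ hγ0
          apply Finset.sum_le_sum
          intro s' _
          exact mul_le_mul_of_nonneg_left (hs0 s' (Finset.mem_univ _)) (hM0 _ _)
      _ = γ * W s0 := by rw [← Finset.sum_mul, hM1, one_mul]
  have h2 : W s0 ≤ 0 := by nlinarith
  intro s; exact le_trans (hs0 s (Finset.mem_univ _)) h2

/-- Feasible Reward Set, explicit ⇒ feasible: if for every agent `i` there exist
`A^i ≥ 0` and `V^i` such that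
`R^i(s,a) = −A^i(s,a)·1_{E^i(s,a)} + V^i(s) − γ Σ_{s'} P(s'|s,a) V^i(s')`,
then `π*` is a Nash equilibrium of the Markov game with rewards `(R^1,…,R^n)`. -/
theorem stmt6 [Fintype S] [Nonempty S] [∀ i, Fintype (A i)] [∀ i, Nonempty (A i)]
    (hn : 1 ≤ n)
    (γ : ℝ) (hγ0 : 0 ≤ γ) (hγ1 : γ < 1)
    (P : S → (∀ i, A i) → S → ℝ) (hP : ∀ s a, IsProbVec (P s a))
    (π : ∀ i : Fin n, S → A i → ℝ) (hπ : ∀ i s, IsProbVec (π i s))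
    (R : Fin n → S → (∀ j, A j) → ℝ)
    (hR : ∀ i : Fin n, ∃ (Adv : S → (∀ j, A j) → ℝ) (Vi : S → ℝ),
      (∀ s a, 0 ≤ Adv s a) ∧
      (∀ s a, R i s a =
        -Adv s a * (if π i s (a i) = 0 ∧ 0 < exceptProb π i s a then (1 : ℝ) else 0)
          + Vi s - γ * ∑ s', P s a s' * Vi s')) :
    IsNash γ P R π := by
  intro i ρ hρ Vdev V hBd hBj
  obtain ⟨Adv, Vi, hA0, hReq⟩ := hR i
  have hexc0 : ∀ s a, 0 ≤ exceptProb π i s a := fun s a =>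
    Finset.prod_nonneg fun j _ => (hπ j s).1 (a j)
  have hjointsplit : ∀ s a, jointProb π s a = π i s (a i) * exceptProb π i s a := fun s a =>
    (Finset.mul_prod_erase Finset.univ (fun j => π j s (a j)) (Finset.mem_univ i)).symm
  have hjoint0 : ∀ s a, 0 ≤ jointProb π s a := fun s a =>
    Finset.prod_nonneg fun j _ => (hπ j s).1 (a j)
  have hdev0 : ∀ s a, 0 ≤ devProb π i ρ s a := fun s a =>
    mul_nonneg ((hρ s).1 (a i)) (hexc0 s a)
  have hjoint1 : ∀ s, ∑ a, jointProb π s a = 1 := by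
    intro s
    have h := Finset.prod_univ_sum (fun j : Fin n => (Finset.univ : Finset (A j)))
      (fun j x => π j s x)
    rw [Fintype.piFinset_univ] at h
    simp only [jointProb]
    rw [← h]
    exact Finset.prod_eq_one fun j _ => (hπ j s).2
  have hdev1 : ∀ s, ∑ a, devProb π i ρ s a = 1 := by
    intro s
    set g : ∀ j, A j → ℝ := Function.update (fun j => π j s) i (ρ s) with hg
    have hgd : ∀ a, devProb π i ρ s a = ∏ j, g j (a j) := by
      intro a
      rw [← Finset.mul_prod_erase Finset.univ (fun j => g j (a j)) (Finset.mem_univ i)]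
      have h1 : g i (a i) = ρ s (a i) := by rw [hg, Function.update_self]
      have h2 : ∏ j ∈ Finset.univ.erase i, g j (a j)
          = ∏ j ∈ Finset.univ.erase i, π j s (a j) := by
        apply Finset.prod_congr rfl
        intro j hj
        rw [hg, Function.update_of_ne (Finset.ne_of_mem_erase hj)]
      rw [h1, h2]; rfl
    have h := Finset.prod_univ_sum (fun j : Fin n => (Finset.univ : Finset (A j)))
      (fun j x => g j x)
    rw [Fintype.piFinset_univ] at h
    calc ∑ a, devProb π i ρ s a = ∑ a : ∀ j, A j, ∏ j, g j (a j) :=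
          Finset.sum_congr rfl fun a _ => hgd a
      _ = ∏ j, ∑ x, g j x := h.symm
      _ = 1 := by
          apply Finset.prod_eq_one
          intro j _
          rcases eq_or_ne j i with rfl | hji
          · rw [hg]; simp only [Function.update_self]; exact (hρ s).2
          · rw [hg, Function.update_of_ne hji]; exact (hπ j s).2
  -- generic sum decomposition
  have hsum : ∀ (s : S) (d : (∀ j, A j) → ℝ), (∑ a, d a) = 1 →
      ∑ a, d a * R i s a
        = (∑ a, d a * (-Adv s a *
            (if π i s (a i) = 0 ∧ 0 < exceptProb π i s a then (1 : ℝ) else 0)))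
          + Vi s - γ * ∑ s', (∑ a, d a * P s a s') * Vi s' := by
    intro s d hd1
    calc ∑ a, d a * R i s a
        = ∑ a, (d a * (-Adv s a *
            (if π i s (a i) = 0 ∧ 0 < exceptProb π i s a then (1 : ℝ) else 0))
            + d a * Vi s - γ * (d a * ∑ s', P s a s' * Vi s')) := by
          apply Finset.sum_congr rfl
          intro a _
          rw [hReq s a]; ring
      _ = (∑ a, d a * (-Adv s a *
            (if π i s (a i) = 0 ∧ 0 < exceptProb π i s a then (1 : ℝ) else 0)))
          + (∑ a, d a) * Vi s - γ * ∑ a, d a * ∑ s', P s a s' * Vi s' := by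
          rw [Finset.sum_sub_distrib, Finset.sum_add_distrib, ← Finset.sum_mul,
            ← Finset.mul_sum]
      _ = _ := by
          rw [hd1, one_mul]
          congr 1
          congr 1
          simp only [Finset.mul_sum]
          rw [Finset.sum_comm]
          apply Finset.sum_congr rfl
          intro s' _
          rw [Finset.sum_mul]
          apply Finset.sum_congr rfl
          intro a _
          ring
  -- kernels
  set Mj : S → S → ℝ := fun s s' => ∑ a, jointProb π s a * P s a s' with hMj
  set Md : S → S → ℝ := fun s s' => ∑ a, devProb π i ρ s a * P s a s' with hMd
  have hMj0 : ∀ s s', 0 ≤ Mj s s' := fun s s' =>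
    Finset.sum_nonneg fun a _ => mul_nonneg (hjoint0 s a) ((hP s a).1 s')
  have hMd0 : ∀ s s', 0 ≤ Md s s' := fun s s' =>
    Finset.sum_nonneg fun a _ => mul_nonneg (hdev0 s a) ((hP s a).1 s')
  have hMj1 : ∀ s, ∑ s', Mj s s' = 1 := by
    intro s
    simp only [hMj]
    rw [Finset.sum_comm]
    calc ∑ a, ∑ s', jointProb π s a * P s a s'
        = ∑ a, jointProb π s a := by
          apply Finset.sum_congr rfl
          intro a _
          rw [← Finset.mul_sum, (hP s a).2, mul_one]
      _ = 1 := hjoint1 s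
  have hMd1 : ∀ s, ∑ s', Md s s' = 1 := by
    intro s
    simp only [hMd]
    rw [Finset.sum_comm]
    calc ∑ a, ∑ s', devProb π i ρ s a * P s a s'
        = ∑ a, devProb π i ρ s a := by
          apply Finset.sum_congr rfl
          intro a _
          rw [← Finset.mul_sum, (hP s a).2, mul_one]
      _ = 1 := hdev1 s
  -- indicator term vanishes under joint policy
  have hjr : ∀ s, ∑ a, jointProb π s a * R i s a
      = Vi s - γ * ∑ s', Mj s s' * Vi s' := by
    intro s
    rw [hsum s _ (hjoint1 s)]
    have hz : (∑ a, jointProb π s a * (-Adv s a *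
        (if π i s (a i) = 0 ∧ 0 < exceptProb π i s a then (1 : ℝ) else 0))) = 0 := by
      apply Finset.sum_eq_zero
      intro a _
      by_cases hc : π i s (a i) = 0 ∧ 0 < exceptProb π i s a
      · rw [hjointsplit s a, hc.1, zero_mul, zero_mul]
      · rw [if_neg hc, mul_zero, mul_zero]
    rw [hz, zero_add]
  -- indicator term is nonpositive under deviation policy
  have hdr : ∀ s, ∑ a, devProb π i ρ s a * R i s a
      ≤ Vi s - γ * ∑ s', Md s s' * Vi s' := by
    intro s
    rw [hsum s _ (hdev1 s)]
    have hz : (∑ a, devProb π i ρ s a * (-Adv s a *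
        (if π i s (a i) = 0 ∧ 0 < exceptProb π i s a then (1 : ℝ) else 0))) ≤ 0 := by
      apply Finset.sum_nonpos
      intro a _
      have h0 : 0 ≤ Adv s a * (if π i s (a i) = 0 ∧ 0 < exceptProb π i s a
          then (1 : ℝ) else 0) := mul_nonneg (hA0 s a) (by positivity)
      nlinarith [hdev0 s a]
    linarith [hz]
  -- V = Vi
  have hVeq : ∀ s, V s = Vi s := by
    have key : ∀ s, V s - Vi s = γ * ∑ s', Mj s s' * (V s' - Vi s') := by
      intro s
      have h1 := hBj s
      rw [hjr s] at h1
      have h2 : ∑ s', Mj s s' * (V s' - Vi s')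
          = (∑ s', Mj s s' * V s') - ∑ s', Mj s s' * Vi s' := by
        rw [← Finset.sum_sub_distrib]
        apply Finset.sum_congr rfl
        intro s' _
        ring
      rw [h2]
      simp only [hMj] at h1 ⊢
      linarith [h1]
    have hle1 : ∀ s, V s - Vi s ≤ 0 := contraction_nonpos hγ0 hγ1 Mj hMj0 hMj1 (fun s => V s - Vi s)
      (fun s => le_of_eq (key s))
    have hle2 : ∀ s, Vi s - V s ≤ 0 := contraction_nonpos hγ0 hγ1 Mj hMj0 hMj1 (fun s => Vi s - V s)
      (by
        intro s
        show Vi s - V s ≤ γ * ∑ s', Mj s s' * (Vi s' - V s')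
        have := key s
        have h2 : ∑ s', Mj s s' * (Vi s' - V s')
            = -∑ s', Mj s s' * (V s' - Vi s') := by
          rw [← Finset.sum_neg_distrib]
          apply Finset.sum_congr rfl
          intro s' _
          ring
        rw [h2]
        linarith)
    intro s
    have ha : V s - Vi s ≤ 0 := hle1 s
    have hb : Vi s - V s ≤ 0 := hle2 s
    linarith
  -- Vdev ≤ Vi
  have hdle : ∀ s, Vdev s - Vi s ≤ γ * ∑ s', Md s s' * (Vdev s' - Vi s') := by
    intro s
    have h1 := hBd s
    have h2 := hdr s
    have h3 : ∑ s', Md s s' * (Vdev s' - Vi s')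
        = (∑ s', Md s s' * Vdev s') - ∑ s', Md s s' * Vi s' := by
      rw [← Finset.sum_sub_distrib]
      apply Finset.sum_congr rfl
      intro s' _
      ring
    rw [h3]
    simp only [hMd] at h2 ⊢
    have hγsum : γ * ((∑ s', (∑ a, devProb π i ρ s a * P s a s') * Vdev s')
        - ∑ s', (∑ a, devProb π i ρ s a * P s a s') * Vi s')
        = γ * ∑ s', (∑ a, devProb π i ρ s a * P s a s') * Vdev s'
          - γ * ∑ s', (∑ a, devProb π i ρ s a * P s a s') * Vi s' := by ring
    linarith [h1, h2]
  have hfin := contraction_nonpos hγ0 hγ1 Md hMd0 hMd1 (fun s => Vdev s - Vi s) hdle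
  intro s
  have ha : Vdev s - Vi s ≤ 0 := hfin s
  rw [hVeq s]
  linarith
end
end

section
/- Let P and P̂ be two transition kernels and R = (R^1,…,R^n), R̂ = (R̂^1,…,R̂^n) two tuples of reward functions, and suppose the joint policy π̂ is a Nash equilibrium of the Markov game with kernel P̂ and rewards R̂. Fix an agent i and an agent-i policy ρ^i, and write π̃ = (ρ^i, π̂^{-i}). Let V^{i,π̂} and V^{i,π̃} denote the value functions of π̂ and π̃ under (P, R^i), and for a joint policy π let ŵ^π_s(s̄,a) = π(a|s̄)·[(I − γ M̂_π)⁻¹]_{s,s̄} denote the discounted visitation under kernel P̂ from initial state s, where M̂_π(x,y) = Σ_{a∈A} π(a|x) P̂(y|x,a). Then for every state s: V^{i,π̃}(s) − V^{i,π̂}(s) ≤ Σ_{s̄,a} ŵ^{π̂}_s(s̄,a)·[ R̂^i(s̄,a) − R^i(s̄,a) + γ Σ_{s'} (P̂(s'|s̄,a) − P(s'|s̄,a)) V^{i,π̂}(s') ] + Σ_{s̄,a} ŵ^{π̃}_s(s̄,a)·[ R^i(s̄,a) − R̂^i(s̄,a) + γ Σ_{s'} (P(s'|s̄,a) − P̂(s'|s̄,a))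 V^{i,π̃}(s') ]. -/
open Finset

noncomputable section

variable {n : ℕ} {S : Type*} {A : Fin n → Type*}

/-- The state-transition matrix `M_π(s,s') = Σ_a π(a|s) P(s'|s,a)` induced by a joint
state-action distribution `πj` and a kernel `P`. -/
def transMatrix [Fintype S] [∀ i, Fintype (A i)]
    (P : S → (∀ i, A i) → S → ℝ) (πj : S → (∀ i, A i) → ℝ) : Matrix S S ℝ :=
  fun s s' => ∑ a, πj s a * P s a s'

/-! ### Auxiliary lemmas -/

section Aux

variable [Fintype S] [DecidableEq S] [∀ i, Fintype (A i)]

lemma jointProb_isProbVec (π : ∀ i : Fin n, S → A i → ℝ)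
    (hπ : ∀ i s, IsProbVec (π i s)) (s : S) : IsProbVec (jointProb π s) := by
  constructor
  · intro a; exact Finset.prod_nonneg fun j _ => (hπ j s).1 (a j)
  · rw [show (∑ a : ∀ i, A i, jointProb π s a) = ∏ i, ∑ x, π i s x from
      (Fintype.prod_sum _).symm]
    simp [fun i => (hπ i s).2]

lemma devProb_eq_jointProb (π : ∀ i : Fin n, S → A i → ℝ)
    (i : Fin n) (ρ : S → A i → ℝ) :
    devProb π i ρ = jointProb (Function.update π i ρ) := by
  funext s a
  unfold devProb exceptProb jointProb
  rw [← Finset.mul_prod_erase Finset.univ _ (Finset.mem_univ i)]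
  rw [Function.update_self]
  congr 1
  exact Finset.prod_congr rfl fun j hj => by
    rw [Function.update_of_ne (Finset.mem_erase.mp hj).1]

lemma update_isProbVec (π : ∀ i : Fin n, S → A i → ℝ)
    (hπ : ∀ i s, IsProbVec (π i s)) (i : Fin n) (ρ : S → A i → ℝ)
    (hρ : ∀ s, IsProbVec (ρ s)) :
    ∀ j s, IsProbVec (Function.update π i ρ j s) := by
  intro j s
  rcases eq_or_ne j i with rfl | hj
  · rw [Function.update_self]; exact hρ s
  · rw [Function.update_of_ne hj]; exact hπ j s

lemma transMatrix_nonneg (P : S → (∀ i, A i) → S → ℝ) (πj : S → (∀ i, A i) → ℝ)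
    (hπ : ∀ s, IsProbVec (πj s)) (hP : ∀ s a, IsProbVec (P s a)) :
    ∀ s s', 0 ≤ transMatrix P πj s s' := fun s s' =>
  Finset.sum_nonneg fun a _ => mul_nonneg ((hπ s).1 a) ((hP s a).1 s')

lemma transMatrix_rowsum (P : S → (∀ i, A i) → S → ℝ) (πj : S → (∀ i, A i) → ℝ)
    (hπ : ∀ s, IsProbVec (πj s)) (hP : ∀ s a, IsProbVec (P s a)) :
    ∀ s, ∑ s', transMatrix P πj s s' = 1 := by
  intro s
  unfold transMatrix
  rw [Finset.sum_comm]
  calc ∑ a, ∑ s', πj s a * P s a s' = ∑ a, πj s a := by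
        refine Finset.sum_congr rfl fun a _ => ?_
        rw [← Finset.mul_sum, (hP s a).2, mul_one]
  _ = 1 := (hπ s).2

lemma bmat_det_ne_zero [Nonempty S] (γ : ℝ) (hγ0 : 0 ≤ γ) (hγ1 : γ < 1)
    (M : Matrix S S ℝ)
    (hM0 : ∀ s s', 0 ≤ M s s') (hM1 : ∀ s, ∑ s', M s s' = 1) :
    ((1 : Matrix S S ℝ) - γ • M).det ≠ 0 := by
  intro h
  obtain ⟨v, hv0, hv⟩ := (Matrix.exists_mulVec_eq_zero_iff).mpr h
  obtain ⟨s₀, -, hs₀⟩ := Finset.exists_max_image Finset.univ (fun s => |v s|)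
    Finset.univ_nonempty
  set c := |v s₀| with hc
  have hvs : ∀ s, v s = γ * ∑ s', M s s' * v s' := by
    intro s
    have := congrFun hv s
    simp only [Matrix.mulVec, dotProduct, Matrix.sub_apply, Matrix.one_apply,
      Matrix.smul_apply, smul_eq_mul, Pi.zero_apply, sub_mul, ite_mul, one_mul, zero_mul,
      Finset.sum_sub_distrib] at this
    rw [Finset.sum_ite_eq Finset.univ s v] at this
    simp only [Finset.mem_univ, if_true] at this
    rw [Finset.mul_sum]
    simp only [← mul_assoc]
    linarith [this]
  have hcle : c ≤ γ * c := by
    calc c = |γ * ∑ s', M s₀ s' * v s'| := by rw [hc, hvs s₀]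
    _ = γ * |∑ s', M s₀ s' * v s'| := by rw [abs_mul, abs_of_nonneg hγ0]
    _ ≤ γ * ∑ s', M s₀ s' * |v s'| := by
        apply mul_le_mul_of_nonneg_left _ hγ0
        refine (Finset.abs_sum_le_sum_abs _ _).trans ?_
        refine Finset.sum_le_sum fun s' _ => ?_
        rw [abs_mul, abs_of_nonneg (hM0 s₀ s')]
    _ ≤ γ * ∑ s', M s₀ s' * c := by
        apply mul_le_mul_of_nonneg_left _ hγ0
        exact Finset.sum_le_sum fun s' _ =>
          mul_le_mul_of_nonneg_left (hs₀ s' (Finset.mem_univ s')) (hM0 s₀ s')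
    _ = γ * c := by rw [← Finset.sum_mul, hM1 s₀, one_mul]
  have hcpos : 0 < c := by
    obtain ⟨s, hs⟩ := Function.ne_iff.mp hv0
    exact lt_of_lt_of_le (abs_pos.mpr hs) (hs₀ s (Finset.mem_univ s))
  nlinarith

lemma mulVec_B (γ : ℝ) (P : S → (∀ i, A i) → S → ℝ)
    (πj : S → (∀ i, A i) → ℝ) (V : S → ℝ) (s : S) :
    (((1 : Matrix S S ℝ) - γ • transMatrix P πj).mulVec V) s
      = V s - γ * ∑ s', (∑ a, πj s a * P s a s') * V s' := by
  simp only [Matrix.mulVec, dotProduct, Matrix.sub_apply, Matrix.one_apply,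
    Matrix.smul_apply, smul_eq_mul, transMatrix, sub_mul, ite_mul, one_mul, zero_mul,
    Finset.sum_sub_distrib]
  rw [Finset.sum_ite_eq Finset.univ s V]
  simp only [Finset.mem_univ, if_true]
  rw [Finset.mul_sum]
  congr 1
  exact Finset.sum_congr rfl fun x _ => by ring

lemma bellman_iff (γ : ℝ) (P : S → (∀ i, A i) → S → ℝ) (R : S → (∀ i, A i) → ℝ)
    (πj : S → (∀ i, A i) → ℝ) (V : S → ℝ) :
    BellmanEq γ P R πj V ↔
      ((1 : Matrix S S ℝ) - γ • transMatrix P πj).mulVec V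
        = fun s => ∑ a, πj s a * R s a := by
  constructor
  · intro h
    funext s
    rw [mulVec_B]
    have := h s
    linarith
  · intro h s
    have h2 := congrFun h s
    rw [mulVec_B] at h2
    have h3 : V s - γ * ∑ s', (∑ a, πj s a * P s a s') * V s'
        = ∑ a, πj s a * R s a := h2
    linarith

lemma bellman_exists (γ : ℝ) (P : S → (∀ i, A i) → S → ℝ) (R : S → (∀ i, A i) → ℝ)
    (πj : S → (∀ i, A i) → ℝ)
    (hdet : ((1 : Matrix S S ℝ) - γ • transMatrix P πj).det ≠ 0) :
    ∃ V, BellmanEq γ P R πj V := by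
  refine ⟨((1 : Matrix S S ℝ) - γ • transMatrix P πj)⁻¹.mulVec
      (fun s => ∑ a, πj s a * R s a), (bellman_iff γ P R πj _).mpr ?_⟩
  rw [Matrix.mulVec_mulVec, Matrix.mul_nonsing_inv _ (isUnit_iff_ne_zero.mpr hdet),
    Matrix.one_mulVec]

lemma diff_formula (γ : ℝ) (P Ph : S → (∀ i, A i) → S → ℝ)
    (R Rh : S → (∀ i, A i) → ℝ) (πj : S → (∀ i, A i) → ℝ) (V Vh : S → ℝ)
    (hdet : ((1 : Matrix S S ℝ) - γ • transMatrix Ph πj).det ≠ 0)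
    (hV : BellmanEq γ P R πj V) (hVh : BellmanEq γ Ph Rh πj Vh) (s : S) :
    V s - Vh s = ∑ sb, ∑ a,
      (πj sb a * ((1 : Matrix S S ℝ) - γ • transMatrix Ph πj)⁻¹ s sb) *
        (R sb a - Rh sb a + γ * ∑ s', (P sb a s' - Ph sb a s') * V s') := by
  set Bh := (1 : Matrix S S ℝ) - γ • transMatrix Ph πj with hBhdef
  set E : S → ℝ := fun sb => ∑ a, πj sb a *
      (R sb a - Rh sb a + γ * ∑ s', (P sb a s' - Ph sb a s') * V s') with hEdef
  have hBD : Bh.mulVec (fun t => V t - Vh t) = E := by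
    funext sb
    rw [hBhdef, mulVec_B]
    have h1 := hV sb
    have h2 := hVh sb
    have d1 : ∑ s', (∑ a, πj sb a * Ph sb a s') * (V s' - Vh s')
        = (∑ s', (∑ a, πj sb a * Ph sb a s') * V s')
          - ∑ s', (∑ a, πj sb a * Ph sb a s') * Vh s' := by
      rw [← Finset.sum_sub_distrib]
      exact Finset.sum_congr rfl fun _ _ => by ring
    have hEeq : E sb = (∑ a, πj sb a * R sb a) - (∑ a, πj sb a * Rh sb a)
        + γ * ((∑ s', (∑ a, πj sb a * P sb a s') * V s')
          - ∑ s', (∑ a, πj sb a * Ph sb a s') * V s') := by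
      rw [hEdef]
      simp only
      calc ∑ a, πj sb a *
            (R sb a - Rh sb a + γ * ∑ s', (P sb a s' - Ph sb a s') * V s')
          = ∑ a, (πj sb a * R sb a - πj sb a * Rh sb a
              + ∑ s', γ * (πj sb a * ((P sb a s' - Ph sb a s') * V s'))) := by
            refine Finset.sum_congr rfl fun a _ => ?_
            rw [mul_add, mul_sub, Finset.mul_sum, Finset.mul_sum]
            congr 1
            exact Finset.sum_congr rfl fun _ _ => by ring
      _ = (∑ a, (πj sb a * R sb a - πj sb a * Rh sb a))
            + ∑ a, ∑ s', γ * (πj sb a * ((P sb a s' - Ph sb a s') * V s')) :=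
          Finset.sum_add_distrib
      _ = (∑ a, πj sb a * R sb a) - (∑ a, πj sb a * Rh sb a)
            + γ * ((∑ s', (∑ a, πj sb a * P sb a s') * V s')
              - ∑ s', (∑ a, πj sb a * Ph sb a s') * V s') := by
          rw [Finset.sum_sub_distrib, Finset.sum_comm]
          congr 1
          rw [← Finset.sum_sub_distrib, Finset.mul_sum]
          refine Finset.sum_congr rfl fun s' _ => ?_
          rw [Finset.sum_mul (f := fun a => πj sb a * P sb a s'),
            Finset.sum_mul (f := fun a => πj sb a * Ph sb a s'),
            ← Finset.sum_sub_distrib, Finset.mul_sum]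
          exact Finset.sum_congr rfl fun a _ => by ring
    rw [hEeq, d1]
    linarith
  have hD : (fun t => V t - Vh t) = Bh⁻¹.mulVec E := by
    rw [← hBD, Matrix.mulVec_mulVec,
      Matrix.nonsing_inv_mul _ (isUnit_iff_ne_zero.mpr hdet), Matrix.one_mulVec]
  have := congrFun hD s
  rw [this]
  simp only [Matrix.mulVec, dotProduct, hEdef]
  rw [Finset.sum_congr rfl fun sb _ => Finset.mul_sum ..]
  exact Finset.sum_congr rfl fun sb _ => Finset.sum_congr rfl fun a _ => by ring

end Aux

theorem stmt9 [Fintype S] [Nonempty S] [DecidableEq S]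
    [∀ i, Fintype (A i)] [∀ i, Nonempty (A i)]
    (hn : 1 ≤ n)
    (γ : ℝ) (hγ0 : 0 ≤ γ) (hγ1 : γ < 1)
    (P Phat : S → (∀ i, A i) → S → ℝ)
    (hP : ∀ s a, IsProbVec (P s a)) (hPhat : ∀ s a, IsProbVec (Phat s a))
    (R Rhat : Fin n → S → (∀ i, A i) → ℝ)
    (πhat : ∀ i : Fin n, S → A i → ℝ) (hπhat : ∀ i s, IsProbVec (πhat i s))
    (hNash : IsNash γ Phat Rhat πhat)
    (i : Fin n) (ρ : S → A i → ℝ) (hρ : ∀ s, IsProbVec (ρ s))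
    (Vhatπ Vtilde : S → ℝ)
    (hVhatπ : BellmanEq γ P (R i) (jointProb πhat) Vhatπ)
    (hVtilde : BellmanEq γ P (R i) (devProb πhat i ρ) Vtilde) :
    ∀ s, Vtilde s - Vhatπ s ≤
      (∑ sb, ∑ a,
        (jointProb πhat sb a *
            ((1 : Matrix S S ℝ) - γ • transMatrix Phat (jointProb πhat))⁻¹ s sb) *
          (Rhat i sb a - R i sb a + γ * ∑ s', (Phat sb a s' - P sb a s') * Vhatπ s')) +
      ∑ sb, ∑ a,
        (devProb πhat i ρ sb a *
            ((1 : Matrix S S ℝ) - γ • transMatrix Phat (devProb πhat i ρ))⁻¹ s sb) *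
          (R i sb a - Rhat i sb a + γ * ∑ s', (P sb a s' - Phat sb a s') * Vtilde s') := by
  intro s
  set πjh := jointProb πhat with hπjhdef
  set πjt := devProb πhat i ρ with hπjtdef
  have hprobh : ∀ s, IsProbVec (πjh s) := jointProb_isProbVec πhat hπhat
  have hprobt : ∀ s, IsProbVec (πjt s) := by
    rw [hπjtdef, devProb_eq_jointProb]
    exact jointProb_isProbVec _ (update_isProbVec πhat hπhat i ρ hρ)
  have hdeth : ((1 : Matrix S S ℝ) - γ • transMatrix Phat πjh).det ≠ 0 :=
    bmat_det_ne_zero γ hγ0 hγ1 _ (transMatrix_nonneg _ _ hprobh hPhat)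
      (transMatrix_rowsum _ _ hprobh hPhat)
  have hdett : ((1 : Matrix S S ℝ) - γ • transMatrix Phat πjt).det ≠ 0 :=
    bmat_det_ne_zero γ hγ0 hγ1 _ (transMatrix_nonneg _ _ hprobt hPhat)
      (transMatrix_rowsum _ _ hprobt hPhat)
  obtain ⟨Wh, hWh⟩ := bellman_exists γ Phat (Rhat i) πjh hdeth
  obtain ⟨Wt, hWt⟩ := bellman_exists γ Phat (Rhat i) πjt hdett
  have hnash := hNash i ρ hρ Wt Wh hWt hWh s
  have e1 := diff_formula γ P Phat (R i) (Rhat i) πjh Vhatπ Wh hdeth hVhatπ hWh s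
  have e2 := diff_formula γ P Phat (R i) (Rhat i) πjt Vtilde Wt hdett hVtilde hWt s
  have hneg : (∑ sb, ∑ a,
        (πjh sb a * ((1 : Matrix S S ℝ) - γ • transMatrix Phat πjh)⁻¹ s sb) *
          (Rhat i sb a - R i sb a + γ * ∑ s', (Phat sb a s' - P sb a s') * Vhatπ s'))
      = -(∑ sb, ∑ a,
        (πjh sb a * ((1 : Matrix S S ℝ) - γ • transMatrix Phat πjh)⁻¹ s sb) *
          (R i sb a - Rhat i sb a + γ * ∑ s', (P sb a s' - Phat sb a s') * Vhatπ s')) := by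
    rw [← Finset.sum_neg_distrib]
    refine Finset.sum_congr rfl fun sb _ => ?_
    rw [← Finset.sum_neg_distrib]
    refine Finset.sum_congr rfl fun a _ => ?_
    have hT : ∑ s', (Phat sb a s' - P sb a s') * Vhatπ s'
        = -∑ s', (P sb a s' - Phat sb a s') * Vhatπ s' := by
      rw [← Finset.sum_neg_distrib]
      exact Finset.sum_congr rfl fun _ _ => by ring
    rw [hT]; ring
  rw [hneg]
  linarith [e1, e2, hnash]
end
end

section
/- (Good event, policy part.) Let S be a finite nonempty state space with |S| = S̄, and for each agent i ∈ {1,…,n} (n ≥ 2) a finite action set A^i, with joint action space A = A^1 × ⋯ × A^n and Ā = ∏_i |A^i|. Let π* be a joint policy such that for some π_min ∈ (0,1) every agent i satisfies π*^i(a^i|s) ∈ {0} ∪ [π_min, 1) for all (s,a^i). For each state s, let (a^s_t)_{t≥1} be i.i.d. A-valued random variables with law π*(·|s) (all mutually independent across states and times), and let π̂^i_k(a^i|s) be the empirical frequency of the value a^i among the agent-i components of a^s_1,…,a^s_k. For agent i and (s,a) ∈ S × A let E(s,a) be the condition 'π*^i(a^i|s) = 0 and π*^{-i}(a^{-i}|s)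 > 0' and Ê_k(s,a) the analogous condition for π̂_k. Then for δ ∈ (0,1), with probability at least 1 − δ/2, simultaneously for all k ≥ 1, all agents i, and all (s,a) ∈ S × A: |1_{E(s,a)} − 1_{Ê_k(s,a)}| ≤ 1{k ≤ max(1, ξ(k, δ/2))}, where ξ(k, δ/2) = log(2 S̄ Ā (n−1) k² / δ) / log(1/(1−π_min)). -/
/-!
Off a null event every sample lies in the support of `π*`, so `π̂_k` can only vanish where `π*`
does; once every supported action of every agent at every state has been sampled, the supports
of `π̂_k` and `π*` coincide and the two indicators agree. A supported action has probability at
least `π_min`, so it is missed by `k` independent samples with probability at most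
`(1 - π_min)^k`. Past the threshold `ξ`, a union bound over the `S̄ ∑ᵢ |Aⁱ| ≤ S̄ Ā (n-1)` triples
`(s, i, b)` (each `|Aⁱ| ≥ 2` because `π*ⁱ(·|s) < 1`) makes this at most `δ/(2k²)`, and
`∑_{k≥2} 1/k² = π²/6 - 1 < 1`.
-/
open MeasureTheory ProbabilityTheory Finset
open scoped ENNReal

noncomputable section

variable {n : ℕ} {S : Type*} {A : Fin n → Type*}

/-- The empirical frequency `π̂^i_k(b|s)` of the action `b` among the agent-`i`
components of the first `k` samples `X s 1, …, X s k` of joint actions at state `s`. -/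
def empPolicy {Ω : Type*} [∀ i, DecidableEq (A i)]
    (X : S → ℕ → Ω → ∀ i, A i) (i : Fin n) (k : ℕ) (s : S) (b : A i) (ω : Ω) : ℝ :=
  (1 / (k : ℝ)) * ∑ t ∈ Finset.Icc 1 k, (if X s t ω i = b then (1 : ℝ) else 0)


lemma IsProbVec.two_le_card {X : Type*} [Fintype X] {p : X → ℝ} (hp : IsProbVec p)
    (hlt : ∀ x, p x < 1) : 2 ≤ Fintype.card X := by
  by_contra! h
  have : Subsingleton X := Fintype.card_le_one_iff_subsingleton.mp (by omega)
  have hsum := hp.2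
  rcases isEmpty_or_nonempty X with hX | ⟨⟨x⟩⟩
  · simp at hsum
  · rw [Fintype.sum_subsingleton _ x] at hsum
    linarith [hlt x]

lemma Finset.sum_le_card_sub_one_mul_prod {ι : Type*} [Fintype ι] [Nontrivial ι] (c : ι → ℕ)
    (hc : ∀ i, 2 ≤ c i) : ∑ i, c i ≤ (Fintype.card ι - 1) * ∏ i, c i := by
  classical
  have two_mul_le_prod : ∀ i, 2 * c i ≤ ∏ j, c j := by
    intro i
    obtain ⟨j, hji⟩ := exists_ne i
    rw [← Finset.mul_prod_erase _ _ (Finset.mem_univ i), mul_comm]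
    gcongr
    exact (hc j).trans (Finset.single_le_prod' (fun k _ => by linarith [hc k])
      (Finset.mem_erase.mpr ⟨hji, Finset.mem_univ j⟩))
  have hcard : 2 ≤ Fintype.card ι := Fintype.one_lt_card
  refine Nat.le_of_mul_le_mul_left ?_ two_pos
  calc 2 * ∑ i, c i = ∑ i, 2 * c i := Finset.mul_sum ..
    _ ≤ ∑ _i : ι, ∏ j, c j := Finset.sum_le_sum fun i _ => two_mul_le_prod i
    _ = Fintype.card ι * ∏ j, c j := by simp
    _ ≤ 2 * ((Fintype.card ι - 1) * ∏ i, c i) := by rw [← mul_assoc]; gcongr; omega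

lemma ProbabilityTheory.iIndepFun.measure_biInter_preimage_le {Ω ι β : Type*}
    [MeasurableSpace Ω] [MeasurableSpace β] {μ : Measure Ω} {Y : ι → Ω → β}
    (hY : iIndepFun Y μ) (F : Finset ι)
    {T : Set β} (hT : MeasurableSet T) {q : ℝ≥0∞} (hq : ∀ i ∈ F, μ (Y i ⁻¹' T) ≤ q) :
    μ (⋂ i ∈ F, Y i ⁻¹' T) ≤ q ^ F.card := by
  rw [hY.meas_biInter fun i _ => ⟨T, hT, rfl⟩]
  exact Finset.prod_le_pow_card F _ q hq

lemma measure_preimage_le_sum_measure_preimage_singleton {Ω α : Type*} [MeasurableSpace Ω]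
    (μ : Measure Ω) (f : Ω → α) (T : Finset α) :
    μ (f ⁻¹' T) ≤ ∑ a ∈ T, μ (f ⁻¹' {a}) := by
  rw [← Set.biUnion_preimage_singleton]
  exact measure_biUnion_finset_le T _

lemma ofReal_one_sub_le_measure_compl {Ω : Type*} [MeasurableSpace Ω] {μ : Measure Ω}
    [IsProbabilityMeasure μ] {s : Set Ω} {ε : ℝ} (hε : 0 ≤ ε) (hs : μ s ≤ ENNReal.ofReal ε) :
    ENNReal.ofReal (1 - ε) ≤ μ sᶜ :=
  calc ENNReal.ofReal (1 - ε) = 1 - ENNReal.ofReal ε := by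
        rw [ENNReal.ofReal_sub _ hε, ENNReal.ofReal_one]
    _ ≤ 1 - μ s := by gcongr
    _ ≤ μ sᶜ := by
        rw [tsub_le_iff_right, add_comm, ← measure_univ (μ := μ)]
        exact measure_univ_le_add_compl s

lemma hasSum_ite_two_le_one_div_sq :
    HasSum (fun k : ℕ => if 2 ≤ k then 1 / (k : ℝ) ^ 2 else 0) (Real.pi ^ 2 / 6 - 1) := by
  refine (hasSum_nat_add_iff' 2).mp ?_
  have h := (hasSum_nat_add_iff' 2).mpr hasSum_zeta_two
  simp only [Finset.sum_range_succ, Finset.sum_range_zero] at h ⊢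
  norm_num at h ⊢
  exact h

lemma mul_pow_lt_of_log_div_log_lt {C δ p : ℝ} (hC : 0 ≤ C) (hδ : 0 < δ) (hp0 : 0 < p)
    (hp1 : p < 1) {k : ℕ} (hk : 0 < k)
    (h : Real.log (C * (k : ℝ) ^ 2 / δ) / Real.log (1 / (1 - p)) < k) :
    C * (1 - p) ^ k < δ / (k : ℝ) ^ 2 := by
  rcases hC.eq_or_lt with rfl | hC
  · rw [zero_mul]
    positivity
  have hq : 0 < 1 - p := by linarith
  have hL : 0 < Real.log (1 / (1 - p)) :=
    Real.log_pos ((one_lt_div hq).mpr (by linarith))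
  rw [div_lt_iff₀ hL, ← Real.log_pow] at h
  have h' := (Real.log_lt_log_iff (by positivity) (by positivity)).mp h
  rw [one_div_pow, div_lt_div_iff₀ hδ (by positivity)] at h'
  rw [lt_div_iff₀ (by positivity)]
  linarith

section JointPolicy

variable [∀ i, Fintype (A i)] {π : ∀ i : Fin n, S → A i → ℝ}

lemma jointProb_nonneg (hπ : ∀ i s, IsProbVec (π i s)) (s : S) (a : ∀ i, A i) :
    0 ≤ jointProb π s a :=
  Finset.prod_nonneg fun i _ => (hπ i s).1 _

lemma jointProb_eq_zero {s : S} {a : ∀ i, A i} {j : Fin n} (h : π j s (a j) = 0) :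
    jointProb π s a = 0 :=
  Finset.prod_eq_zero (Finset.mem_univ j) h

lemma sum_jointProb_piFinset_update_erase [∀ i, DecidableEq (A i)]
    (hπ : ∀ i s, IsProbVec (π i s)) (s : S) (j : Fin n) (b : A j) :
    ∑ a ∈ Fintype.piFinset (Function.update (fun _ => Finset.univ) j (Finset.univ.erase b)),
      jointProb π s a = 1 - π j s b := by
  simp only [jointProb]
  rw [← Finset.prod_univ_sum, Finset.prod_eq_single j]
  · rw [Function.update_self, Finset.sum_erase_eq_sub (Finset.mem_univ b), (hπ j s).2]
  · intro i _ hij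
    rw [Function.update_of_ne hij]
    exact (hπ i s).2
  · simp

variable {Ω : Type*} [MeasurableSpace Ω] {μ : Measure Ω} {Y : Ω → ∀ i, A i} {s : S}

lemma measure_preimage_le_ofReal_sum_jointProb (hπ : ∀ i s, IsProbVec (π i s))
    (hlaw : ∀ a, μ (Y ⁻¹' {a}) = ENNReal.ofReal (jointProb π s a)) (T : Finset (∀ i, A i)) :
    μ (Y ⁻¹' T) ≤ ENNReal.ofReal (∑ a ∈ T, jointProb π s a) := by
  rw [ENNReal.ofReal_sum_of_nonneg fun a _ => jointProb_nonneg hπ s a]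
  simpa only [hlaw] using measure_preimage_le_sum_measure_preimage_singleton μ Y T

lemma measure_setOf_policy_apply_eq_zero (hπ : ∀ i s, IsProbVec (π i s))
    (hlaw : ∀ a, μ (Y ⁻¹' {a}) = ENNReal.ofReal (jointProb π s a)) (j : Fin n) :
    μ {ω | π j s (Y ω j) = 0} = 0 := by
  classical
  refine le_antisymm ?_ bot_le
  set T := Finset.univ.filter fun a : ∀ i, A i => π j s (a j) = 0
  have hset : {ω | π j s (Y ω j) = 0} = Y ⁻¹' ↑T := by
    ext ω
    simp [T]
  calc μ {ω | π j s (Y ω j) = 0}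
      ≤ ENNReal.ofReal (∑ a ∈ T, jointProb π s a) := by
        rw [hset]
        exact measure_preimage_le_ofReal_sum_jointProb hπ hlaw T
    _ = 0 := by
        rw [Finset.sum_eq_zero fun a ha => jointProb_eq_zero (Finset.mem_filter.mp ha).2,
          ENNReal.ofReal_zero]

lemma measure_preimage_apply_ne_le [∀ i, DecidableEq (A i)] (hπ : ∀ i s, IsProbVec (π i s))
    (hlaw : ∀ a, μ (Y ⁻¹' {a}) = ENNReal.ofReal (jointProb π s a)) (j : Fin n) (b : A j) :
    μ (Y ⁻¹' {a | a j ≠ b}) ≤ ENNReal.ofReal (1 - π j s b) := by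
  have hset : {a : ∀ i, A i | a j ≠ b} =
      ↑(Fintype.piFinset (Function.update (fun _ => Finset.univ) j (Finset.univ.erase b))) := by
    ext a
    simp only [Set.mem_ofPred_eq, Fintype.mem_piFinset, Finset.mem_coe]
    constructor
    · intro h i
      rcases eq_or_ne i j with rfl | hij
      · simpa using h
      · simp [Function.update_of_ne hij]
    · intro h
      simpa using h j
  rw [hset, ← sum_jointProb_piFinset_update_erase hπ s j b]
  exact measure_preimage_le_ofReal_sum_jointProb hπ hlaw _

end JointPolicy

-- `max 1 (ξ(k, δ/2))` of the paper, for `C = 2 S̄ Ā (n-1)`.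
def explorationThreshold (C δ p : ℝ) (k : ℕ) : ℝ :=
  max 1 (Real.log (C * (k : ℝ) ^ 2 / δ) / Real.log (1 / (1 - p)))

lemma card_prod_sigma_le [Fintype S] [∀ i, Fintype (A i)] (hn : 2 ≤ n)
    (hcard : ∀ j, 2 ≤ Fintype.card (A j)) :
    2 * (Fintype.card (S × Σ j, A j) : ℝ) ≤
      2 * (Fintype.card S : ℝ) * (∏ i, (Fintype.card (A i) : ℝ)) * ((n : ℝ) - 1) := by
  have : Nontrivial (Fin n) := Fin.nontrivial_iff_two_le.mpr hn
  have hsum := Finset.sum_le_card_sub_one_mul_prod (fun j => Fintype.card (A j)) hcard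
  rw [Fintype.card_fin] at hsum
  have hsum' := (Nat.cast_le (α := ℝ)).mpr hsum
  push_cast [Nat.cast_sub (by omega : 1 ≤ n)] at hsum'
  rw [Fintype.card_prod, Fintype.card_sigma]
  push_cast
  have : (0 : ℝ) ≤ Fintype.card S := Nat.cast_nonneg _
  nlinarith

section Sampling

variable [∀ i, Fintype (A i)] [∀ i, DecidableEq (A i)] {π : ∀ i : Fin n, S → A i → ℝ}
  {Ω : Type*} [MeasurableSpace Ω] {μ : Measure Ω}
  [MeasurableSpace (∀ i, A i)] [MeasurableSingletonClass (∀ i, A i)]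
  {X : S → ℕ → Ω → ∀ i, A i}

lemma measure_forall_sample_ne_le (hπ : ∀ i s, IsProbVec (π i s))
    (hlaw : ∀ s t a, μ (X s t ⁻¹' {a}) = ENNReal.ofReal (jointProb π s a))
    (hindep : iIndepFun (fun p : S × ℕ => X p.1 p.2) μ) (s : S) (j : Fin n) (b : A j) (k : ℕ) :
    μ {ω | ∀ t ∈ Finset.Icc 1 k, X s t ω j ≠ b} ≤ ENNReal.ofReal (1 - π j s b) ^ k := by
  have hset : {ω | ∀ t ∈ Finset.Icc 1 k, X s t ω j ≠ b} =
      ⋂ t ∈ Finset.Icc 1 k, X s t ⁻¹' {a | a j ≠ b} := by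
    ext ω
    simp
  have hsamples : iIndepFun (fun t => X s t) μ :=
    hindep.precomp (g := Prod.mk s) (Prod.mk_right_injective s)
  rw [hset]
  simpa using hsamples.measure_biInter_preimage_le (Finset.Icc 1 k)
    (Set.toFinite _).measurableSet fun t _ => measure_preimage_apply_ne_le hπ (hlaw s t) j b

def unseenEvent (π : ∀ i : Fin n, S → A i → ℝ) (X : S → ℕ → Ω → ∀ i, A i) (k : ℕ) : Set Ω :=
  ⋃ x : S × (Σ j, A j),
    {ω | π x.2.1 x.1 x.2.2 ≠ 0 ∧ ∀ t ∈ Finset.Icc 1 k, X x.1 t ω x.2.1 ≠ x.2.2}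

variable [Fintype S]

lemma measure_unseenEvent_le (hπ : ∀ i s, IsProbVec (π i s))
    (hlaw : ∀ s t a, μ (X s t ⁻¹' {a}) = ENNReal.ofReal (jointProb π s a))
    (hindep : iIndepFun (fun p : S × ℕ => X p.1 p.2) μ) {p : ℝ}
    (hmin : ∀ j s b, π j s b ≠ 0 → p ≤ π j s b) (k : ℕ) :
    μ (unseenEvent π X k) ≤ Fintype.card (S × Σ j, A j) * ENNReal.ofReal (1 - p) ^ k := by
  refine (measure_iUnion_fintype_le _ _).trans ?_
  rw [← nsmul_eq_mul]
  refine Finset.sum_le_card_nsmul _ _ _ fun ⟨s, j, b⟩ _ => ?_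
  by_cases hb : π j s b = 0
  · simp [hb]
  · calc μ {ω | π j s b ≠ 0 ∧ ∀ t ∈ Finset.Icc 1 k, X s t ω j ≠ b}
        ≤ μ {ω | ∀ t ∈ Finset.Icc 1 k, X s t ω j ≠ b} := measure_mono fun ω hω => hω.2
      _ ≤ ENNReal.ofReal (1 - π j s b) ^ k := measure_forall_sample_ne_le hπ hlaw hindep s j b k
      _ ≤ ENNReal.ofReal (1 - p) ^ k := by
          gcongr
          linarith [hmin j s b hb]

lemma measure_unseenEvent_after_threshold_le (hn : 2 ≤ n) (hπ : ∀ i s, IsProbVec (π i s))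
    (hlaw : ∀ s t a, μ (X s t ⁻¹' {a}) = ENNReal.ofReal (jointProb π s a))
    (hindep : iIndepFun (fun p : S × ℕ => X p.1 p.2) μ) {p : ℝ} (hp : p ∈ Set.Ioo (0 : ℝ) 1)
    (hmin : ∀ j s b, π j s b ≠ 0 → p ≤ π j s b) (hcard : ∀ j, 2 ≤ Fintype.card (A j))
    {δ : ℝ} (hδ : 0 < δ) (k : ℕ) :
    μ {ω | ¬ (k : ℝ) ≤ explorationThreshold
        (2 * (Fintype.card S : ℝ) * (∏ i, (Fintype.card (A i) : ℝ)) * ((n : ℝ) - 1)) δ p k ∧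
        ω ∈ unseenEvent π X k} ≤
      ENNReal.ofReal (δ / 2 * if 2 ≤ k then 1 / (k : ℝ) ^ 2 else 0) := by
  set C := 2 * (Fintype.card S : ℝ) * (∏ i, (Fintype.card (A i) : ℝ)) * ((n : ℝ) - 1)
  by_cases hk : (k : ℝ) ≤ explorationThreshold C δ p k
  · simp [hk]
  obtain ⟨hk1, hklog⟩ := max_lt_iff.mp (not_le.mp hk)
  have hk2 : 2 ≤ k := by exact_mod_cast hk1
  have hcard2 : 2 * (Fintype.card (S × Σ j, A j) : ℝ) ≤ C := card_prod_sigma_le hn hcard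
  have hthreshold : C * (1 - p) ^ k < δ / (k : ℝ) ^ 2 :=
    mul_pow_lt_of_log_div_log_lt ((by positivity : (0 : ℝ) ≤ 2 * _).trans hcard2) hδ hp.1 hp.2
      (by omega) hklog
  have hq : 0 ≤ 1 - p := by linarith [hp.2]
  calc μ {ω | ¬ (k : ℝ) ≤ explorationThreshold C δ p k ∧ ω ∈ unseenEvent π X k}
      ≤ μ (unseenEvent π X k) := measure_mono fun ω hω => hω.2
    _ ≤ Fintype.card (S × Σ j, A j) * ENNReal.ofReal (1 - p) ^ k :=
        measure_unseenEvent_le hπ hlaw hindep hmin k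
    _ = ENNReal.ofReal (Fintype.card (S × Σ j, A j) * (1 - p) ^ k) := by
        rw [ENNReal.ofReal_mul (by positivity), ENNReal.ofReal_natCast, ENNReal.ofReal_pow hq]
    _ ≤ ENNReal.ofReal (δ / 2 * if 2 ≤ k then 1 / (k : ℝ) ^ 2 else 0) := by
        refine ENNReal.ofReal_le_ofReal ?_
        rw [if_pos hk2, mul_one_div, div_div, mul_comm 2, ← div_div]
        linarith [mul_le_mul_of_nonneg_right hcard2 (pow_nonneg hq k)]

lemma measure_iUnion_unseenEvent_after_threshold_le (hn : 2 ≤ n)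
    (hπ : ∀ i s, IsProbVec (π i s))
    (hlaw : ∀ s t a, μ (X s t ⁻¹' {a}) = ENNReal.ofReal (jointProb π s a))
    (hindep : iIndepFun (fun p : S × ℕ => X p.1 p.2) μ) {p : ℝ} (hp : p ∈ Set.Ioo (0 : ℝ) 1)
    (hmin : ∀ j s b, π j s b ≠ 0 → p ≤ π j s b) (hcard : ∀ j, 2 ≤ Fintype.card (A j))
    {δ : ℝ} (hδ : 0 < δ) :
    μ (⋃ k : ℕ, {ω | ¬ (k : ℝ) ≤ explorationThreshold
        (2 * (Fintype.card S : ℝ) * (∏ i, (Fintype.card (A i) : ℝ)) * ((n : ℝ) - 1)) δ p k ∧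
        ω ∈ unseenEvent π X k}) ≤ ENNReal.ofReal (δ / 2) := by
  have hsum := hasSum_ite_two_le_one_div_sq.mul_left (δ / 2)
  calc _ ≤ ∑' k : ℕ, ENNReal.ofReal (δ / 2 * if 2 ≤ k then 1 / (k : ℝ) ^ 2 else 0) :=
        (measure_iUnion_le _).trans <| ENNReal.tsum_le_tsum fun k =>
          measure_unseenEvent_after_threshold_le hn hπ hlaw hindep hp hmin hcard hδ k
    _ = ENNReal.ofReal (δ / 2 * (Real.pi ^ 2 / 6 - 1)) := by
        rw [← ENNReal.ofReal_tsum_of_nonneg (fun k => by positivity) hsum.summable, hsum.tsum_eq]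
    _ ≤ ENNReal.ofReal (δ / 2) := by
        refine ENNReal.ofReal_le_ofReal (mul_le_of_le_one_right (by positivity) ?_)
        nlinarith [Real.pi_lt_d2, Real.pi_pos]

end Sampling

lemma Finset.prod_pos_iff_of_nonneg {ι : Type*} {T : Finset ι} {f : ι → ℝ}
    (hf : ∀ j ∈ T, 0 ≤ f j) : 0 < ∏ j ∈ T, f j ↔ ∀ j ∈ T, f j ≠ 0 := by
  rw [(Finset.prod_nonneg hf).lt_iff_ne', Finset.prod_ne_zero_iff]

lemma eq_zero_and_prod_pos_congr {ι : Type*} {f g : ι → ℝ} (hf : ∀ j, 0 ≤ f j)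
    (hg : ∀ j, 0 ≤ g j) (hfg : ∀ j, f j = 0 ↔ g j = 0) (i : ι) (T : Finset ι) :
    (f i = 0 ∧ 0 < ∏ j ∈ T, f j) ↔ (g i = 0 ∧ 0 < ∏ j ∈ T, g j) := by
  rw [Finset.prod_pos_iff_of_nonneg fun j _ => hf j,
    Finset.prod_pos_iff_of_nonneg fun j _ => hg j]
  simp only [ne_eq, hfg]

lemma abs_ite_sub_ite_le_ite {P Q R : Prop} [Decidable P] [Decidable Q] [Decidable R]
    (h : ¬R → (P ↔ Q)) :
    |(if P then (1 : ℝ) else 0) - (if Q then 1 else 0)| ≤ if R then 1 else 0 := by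
  by_cases hR : R
  · rw [if_pos hR]
    split_ifs <;> norm_num
  · simp only [if_neg hR, h hR, sub_self, abs_zero, le_refl]

section EmpiricalPolicy

variable [∀ i, DecidableEq (A i)] {Ω : Type*} {X : S → ℕ → Ω → ∀ i, A i}

lemma empPolicy_nonneg (i : Fin n) (k : ℕ) (s : S) (b : A i) (ω : Ω) :
    0 ≤ empPolicy X i k s b ω := by
  unfold empPolicy
  positivity

lemma empPolicy_eq_zero_iff {π : ∀ i : Fin n, S → A i → ℝ} {j : Fin n} {k : ℕ} {s : S}
    {b : A j} {ω : Ω} (hsupp : ∀ t, π j s (X s t ω j) ≠ 0)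
    (hseen : π j s b ≠ 0 → ∃ t ∈ Finset.Icc 1 k, X s t ω j = b) :
    empPolicy X j k s b ω = 0 ↔ π j s b = 0 := by
  constructor
  · intro h
    by_contra hb
    obtain ⟨t, ht, hXt⟩ := hseen hb
    have hk : 0 < k := by linarith [(Finset.mem_Icc.mp ht).1, (Finset.mem_Icc.mp ht).2]
    have hpos : 0 < empPolicy X j k s b ω :=
      mul_pos (by positivity) (Finset.sum_pos' (fun _ _ => by positivity) ⟨t, ht, by simp [hXt]⟩)
    linarith
  · intro hb
    unfold empPolicy
    rw [Finset.sum_eq_zero fun t _ => if_neg fun hXt => hsupp t (by rwa [hXt]), mul_zero]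

variable [∀ i, Fintype (A i)]

lemma abs_indicator_sub_le_of_forall_seen {π : ∀ i : Fin n, S → A i → ℝ}
    (hπ : ∀ i s, IsProbVec (π i s)) {ω : Ω} {C δ p : ℝ}
    (hsupp : ∀ s t j, π j s (X s t ω j) ≠ 0)
    (hseen : ∀ k : ℕ, ¬ (k : ℝ) ≤ explorationThreshold C δ p k →
      ∀ s j b, π j s b ≠ 0 → ∃ t ∈ Finset.Icc 1 k, X s t ω j = b)
    (k : ℕ) (i : Fin n) (s : S) (a : ∀ j, A j) :
    |(if π i s (a i) = 0 ∧ 0 < exceptProb π i s a then (1 : ℝ) else 0) -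
        (if empPolicy X i k s (a i) ω = 0 ∧
            0 < ∏ j ∈ Finset.univ.erase i, empPolicy X j k s (a j) ω
          then (1 : ℝ) else 0)| ≤
      if (k : ℝ) ≤ explorationThreshold C δ p k then 1 else 0 :=
  abs_ite_sub_ite_le_ite fun hk =>
    eq_zero_and_prod_pos_congr (fun j => (hπ j s).1 (a j))
      (fun j => empPolicy_nonneg j k s (a j) ω)
      (fun j => (empPolicy_eq_zero_iff (hsupp s · j) (hseen k hk s j (a j))).symm) i _

end EmpiricalPolicy

theorem stmt15_general {Ω : Type*} [MeasurableSpace Ω] (μ : Measure Ω) [IsProbabilityMeasure μ]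
    (hn : 2 ≤ n) [Fintype S] [Nonempty S]
    [∀ i, Fintype (A i)] [∀ i, DecidableEq (A i)]
    [MeasurableSpace (∀ i, A i)] [MeasurableSingletonClass (∀ i, A i)]
    (π : ∀ i : Fin n, S → A i → ℝ) (hπ : ∀ i s, IsProbVec (π i s))
    (πmin : ℝ) (hπmin : πmin ∈ Set.Ioo (0 : ℝ) 1)
    (hsupp : ∀ (i : Fin n) (s : S) (b : A i),
      π i s b = 0 ∨ (πmin ≤ π i s b ∧ π i s b < 1))
    (X : S → ℕ → Ω → ∀ i, A i)
    (hlaw : ∀ s t a, μ (X s t ⁻¹' {a}) = ENNReal.ofReal (jointProb π s a))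
    (hindep : iIndepFun
      (fun p : S × ℕ => X p.1 p.2) μ)
    (δ : ℝ) (hδ : δ ∈ Set.Ioo (0 : ℝ) 1) :
    ENNReal.ofReal (1 - δ / 2) ≤
      μ {ω | ∀ k : ℕ, 1 ≤ k → ∀ (i : Fin n) (s : S) (a : ∀ j, A j),
        |(if π i s (a i) = 0 ∧ 0 < exceptProb π i s a then (1 : ℝ) else 0) -
            (if empPolicy X i k s (a i) ω = 0 ∧
                0 < ∏ j ∈ Finset.univ.erase i, empPolicy X j k s (a j) ω
              then (1 : ℝ) else 0)| ≤
          (if (k : ℝ) ≤ max 1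
              (Real.log (2 * (Fintype.card S : ℝ) * (∏ i, (Fintype.card (A i) : ℝ)) *
                  ((n : ℝ) - 1) * (k : ℝ) ^ 2 / δ) /
                Real.log (1 / (1 - πmin)))
            then (1 : ℝ) else 0)} := by
  set C := 2 * (Fintype.card S : ℝ) * (∏ i, (Fintype.card (A i) : ℝ)) * ((n : ℝ) - 1)
  have hmin : ∀ j s b, π j s b ≠ 0 → πmin ≤ π j s b :=
    fun j s b hb => ((hsupp j s b).resolve_left hb).1
  have hcard : ∀ j, 2 ≤ Fintype.card (A j) := fun j =>
    (hπ j (Classical.arbitrary S)).two_le_card fun b =>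
      (hsupp j _ b).elim (fun hb => hb ▸ one_pos) (·.2)
  set N := ⋃ (s : S) (t : ℕ) (j : Fin n), {ω | π j s (X s t ω j) = 0}
  set L := ⋃ k : ℕ, {ω | ¬ (k : ℝ) ≤ explorationThreshold C δ πmin k ∧ ω ∈ unseenEvent π X k}
  have hN : μ N = 0 := measure_iUnion_null fun s => measure_iUnion_null fun t =>
    measure_iUnion_null fun j => measure_setOf_policy_apply_eq_zero hπ (hlaw s t) j
  have hL : μ L ≤ ENNReal.ofReal (δ / 2) :=
    measure_iUnion_unseenEvent_after_threshold_le hn hπ hlaw hindep hπmin hmin hcard hδ.1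
  have hbad : μ (N ∪ L) ≤ ENNReal.ofReal (δ / 2) :=
    (measure_union_le N L).trans (by rw [hN, zero_add]; exact hL)
  refine (ofReal_one_sub_le_measure_compl (by linarith [hδ.1]) hbad).trans
    (measure_mono fun ω hω k _ => ?_)
  simp only [Set.mem_compl_iff, Set.mem_union, not_or, N, L, unseenEvent, Set.mem_iUnion,
    Set.mem_ofPred_eq, not_exists, not_and] at hω
  refine abs_indicator_sub_le_of_forall_seen hπ hω.1 (fun k hk s j b hb => ?_) k
  by_contra hunseen
  push Not at hunseen
  exact hω.2 k hk (s, ⟨j, b⟩) hb hunseen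

/-- Good event, policy part: with i.i.d. joint-action samples
`a^s_t ~ π*(·|s)` (mutually independent over states and times), empirical policies
`π̂^i_k`, and the events `E(s,a)`, `Ê_k(s,a)` as in the explicit reward characterization,
with probability at least `1 − δ/2`, simultaneously for all `k ≥ 1`, agents `i` and
`(s,a)`: `|1_{E(s,a)} − 1_{Ê_k(s,a)}| ≤ 1{k ≤ max(1, ξ(k, δ/2))}`, where
`ξ(k, δ/2) = log(2 S̄ Ā (n−1) k² / δ) / log(1/(1−π_min))`. -/
theorem stmt15 {Ω : Type*} [MeasurableSpace Ω] (μ : Measure Ω) [IsProbabilityMeasure μ]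
    (hn : 2 ≤ n) [Fintype S] [Nonempty S]
    [∀ i, Fintype (A i)] [∀ i, Nonempty (A i)] [∀ i, DecidableEq (A i)]
    [MeasurableSpace (∀ i, A i)] [MeasurableSingletonClass (∀ i, A i)]
    (π : ∀ i : Fin n, S → A i → ℝ) (hπ : ∀ i s, IsProbVec (π i s))
    (πmin : ℝ) (hπmin : πmin ∈ Set.Ioo (0 : ℝ) 1)
    (hsupp : ∀ (i : Fin n) (s : S) (b : A i),
      π i s b = 0 ∨ (πmin ≤ π i s b ∧ π i s b < 1))
    (X : S → ℕ → Ω → ∀ i, A i)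
    (hmeas : ∀ s t, Measurable (X s t))
    (hlaw : ∀ s t a, μ (X s t ⁻¹' {a}) = ENNReal.ofReal (jointProb π s a))
    (hindep : iIndepFun
      (fun p : S × ℕ => X p.1 p.2) μ)
    (δ : ℝ) (hδ : δ ∈ Set.Ioo (0 : ℝ) 1) :
    ENNReal.ofReal (1 - δ / 2) ≤
      μ {ω | ∀ k : ℕ, 1 ≤ k → ∀ (i : Fin n) (s : S) (a : ∀ j, A j),
        |(if π i s (a i) = 0 ∧ 0 < exceptProb π i s a then (1 : ℝ) else 0) -
            (if empPolicy X i k s (a i) ω = 0 ∧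
                0 < ∏ j ∈ Finset.univ.erase i, empPolicy X j k s (a j) ω
              then (1 : ℝ) else 0)| ≤
          (if (k : ℝ) ≤ max 1
              (Real.log (2 * (Fintype.card S : ℝ) * (∏ i, (Fintype.card (A i) : ℝ)) *
                  ((n : ℝ) - 1) * (k : ℝ) ^ 2 / δ) /
                Real.log (1 / (1 - πmin)))
            then (1 : ℝ) else 0)} :=
  stmt15_general μ hn π hπ πmin hπmin hsupp X hlaw hindep δ hδ
end
end
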